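/- Let ψ(x) := ∫_{ℝ^d}(1 - cos(x·t)) ρ(dt) with ρ symmetric and integrating 1∧|t|², and let X, Y be ℝ^d-valued random vectors with characteristic functions f_X, f_Y such that E ψ(X) < ∞ and E ψ(Y) < ∞. Then f_X = f_Y ρ-almost surely if and only if E ψ(X - z) = E ψ(Y - z) for all z ∈ ℝ^d. -/

import Mathlib

open MeasureTheory Complex

set_option maxHeartbeats 2000000

section AuxLevy

lemma trig_ineq (a b : ℝ) :
    1 - Real.cos (a - b) ≤ 2 * (1 - Real.cos a) + 2 * (1 - Real.cos b) := by
  have h1 := Real.sin_sq_add_cos_sq a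
  have h2 := Real.sin_sq_add_cos_sq b
  rw [Real.cos_sub]
  nlinarith [sq_nonneg (Real.sin a + Real.sin b), sq_nonneg (2 - Real.cos a - Real.cos b)]

lemma cos_bound {d : ℕ} (x t : EuclideanSpace ℝ (Fin d)) :
    1 - Real.cos (inner ℝ x t : ℝ) ≤ (2 + ‖x‖ ^ 2 / 2) * min 1 (‖t‖ ^ 2) := by
  have hc : Real.cos (inner ℝ x t : ℝ) ≤ 1 := Real.cos_le_one _
  have hc2 : -1 ≤ Real.cos (inner ℝ x t : ℝ) := Real.neg_one_le_cos _
  have hCS : |(inner ℝ x t : ℝ)| ≤ ‖x‖ * ‖t‖ := abs_real_inner_le_norm x t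
  have hsq : (inner ℝ x t : ℝ) ^ 2 ≤ ‖x‖ ^ 2 * ‖t‖ ^ 2 := by
    have := _root_.sq_abs (inner ℝ x t : ℝ)
    nlinarith [abs_nonneg (inner ℝ x t : ℝ), norm_nonneg x, norm_nonneg t]
  have hquad : 1 - Real.cos (inner ℝ x t : ℝ) ≤ (inner ℝ x t : ℝ) ^ 2 / 2 := by
    have := Real.one_sub_sq_div_two_le_cos (x := (inner ℝ x t : ℝ))
    linarith
  rcases le_total 1 (‖t‖ ^ 2) with h | h
  · rw [min_eq_left h]
    nlinarith [sq_nonneg ‖x‖]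
  · rw [min_eq_right h]
    nlinarith [sq_nonneg ‖x‖, sq_nonneg ‖t‖]

variable {d : ℕ} {ρ : Measure (EuclideanSpace ℝ (Fin d))}
  (hρint : Integrable (fun t => min 1 (‖t‖ ^ 2)) ρ)
  {ψ : EuclideanSpace ℝ (Fin d) → ℝ}
  (hψ : ∀ x, ψ x = ∫ t, (1 - Real.cos (inner ℝ x t : ℝ)) ∂ρ)

include hρint in
lemma K_integrable (x : EuclideanSpace ℝ (Fin d)) :
    Integrable (fun t => 1 - Real.cos (inner ℝ x t : ℝ)) ρ := by
  refine (hρint.const_mul (2 + ‖x‖ ^ 2 / 2)).mono' ?_ ?_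
  · exact ((continuous_const.sub (Real.continuous_cos.comp
      (continuous_inner.comp (Continuous.prodMk_right x)))).measurable).aestronglyMeasurable
  · refine Filter.Eventually.of_forall fun t => ?_
    have h1 : 0 ≤ 1 - Real.cos (inner ℝ x t : ℝ) := by
      have := Real.cos_le_one (inner ℝ x t : ℝ); linarith
    rw [Real.norm_eq_abs, _root_.abs_of_nonneg h1]
    exact cos_bound x t

include hρint hψ in
omit hρint in
lemma psi_nonneg (x : EuclideanSpace ℝ (Fin d)) : 0 ≤ ψ x := by
  rw [hψ]
  refine integral_nonneg fun t => ?_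
  show (0:ℝ) ≤ _
  have := Real.cos_le_one (inner ℝ x t : ℝ); linarith

include hρint hψ in
lemma psi_sub_le (x y : EuclideanSpace ℝ (Fin d)) : ψ (x - y) ≤ 2 * ψ x + 2 * ψ y := by
  rw [hψ (x - y)]
  have h : ∀ t : EuclideanSpace ℝ (Fin d), 1 - Real.cos (inner ℝ (x - y) t : ℝ) ≤
      2 * (1 - Real.cos (inner ℝ x t : ℝ)) + 2 * (1 - Real.cos (inner ℝ y t : ℝ)) := by
    intro t
    rw [inner_sub_left]
    exact trig_ineq _ _
  calc ∫ t, (1 - Real.cos (inner ℝ (x - y) t : ℝ)) ∂ρ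
      ≤ ∫ t, (2 * (1 - Real.cos (inner ℝ x t : ℝ)) + 2 * (1 - Real.cos (inner ℝ y t : ℝ))) ∂ρ := by
        refine integral_mono (K_integrable hρint _) ?_ h
        exact ((K_integrable hρint x).const_mul 2).add ((K_integrable hρint y).const_mul 2)
    _ = 2 * ψ x + 2 * ψ y := by
        rw [integral_add ((K_integrable hρint x).const_mul 2) ((K_integrable hρint y).const_mul 2),
          integral_const_mul, integral_const_mul, hψ x, hψ y]

include hρint in
lemma rho_sigmaFinite :
    SigmaFinite (ρ.restrict ({(0 : EuclideanSpace ℝ (Fin d))}ᶜ)) := by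
  constructor
  refine ⟨{ set := fun n => {t | 1 / (n + 1) ≤ ‖t‖} ∪ {0}
            set_mem := fun _ => trivial
            finite := ?_
            spanning := ?_ }⟩
  · intro n
    have hle : ρ.restrict ({(0 : EuclideanSpace ℝ (Fin d))}ᶜ)
        ({t | 1 / (n + 1) ≤ ‖t‖} ∪ {0}) ≤
        ρ.restrict ({(0 : EuclideanSpace ℝ (Fin d))}ᶜ) {t | 1 / (n + 1) ≤ ‖t‖} +
        ρ.restrict ({(0 : EuclideanSpace ℝ (Fin d))}ᶜ) {0} := measure_union_le _ _
    have h0 : ρ.restrict ({(0 : EuclideanSpace ℝ (Fin d))}ᶜ) {0} = 0 := by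
      rw [Measure.restrict_apply' (measurableSet_singleton 0).compl]
      simp
    have h1 : ρ.restrict ({(0 : EuclideanSpace ℝ (Fin d))}ᶜ) {t | 1 / (n + 1) ≤ ‖t‖} ≤
        ρ {t | 1 / (n + 1) ≤ ‖t‖} := by
      rw [Measure.restrict_apply' (measurableSet_singleton 0).compl]
      exact measure_mono Set.inter_subset_left
    have h2 : ρ {t | 1 / (n + 1) ≤ ‖t‖} ≤
        ρ {t | min 1 ((1 / (n + 1 : ℝ)) ^ 2) ≤ min 1 (‖t‖ ^ 2)} := by
      refine measure_mono fun t ht => ?_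
      have h3 : (0:ℝ) < 1 / (n + 1 : ℝ) := by positivity
      have h4 : (1 / (n + 1 : ℝ)) ^ 2 ≤ ‖t‖ ^ 2 := by
        have := ht; simp only [Set.mem_setOf_eq] at this
        nlinarith [norm_nonneg t]
      exact le_trans (min_le_min le_rfl h4) le_rfl
    have h5 : ρ {t | min 1 ((1 / (n + 1 : ℝ)) ^ 2) ≤ min 1 (‖t‖ ^ 2)} < ⊤ :=
      hρint.measure_ge_lt_top (by positivity)
    calc ρ.restrict ({(0 : EuclideanSpace ℝ (Fin d))}ᶜ) ({t | 1 / (n + 1) ≤ ‖t‖} ∪ {0})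
        ≤ _ + _ := hle
      _ < ⊤ := by rw [h0, add_zero]; exact lt_of_le_of_lt (le_trans h1 h2) h5
  · refine Set.eq_univ_of_forall fun t => ?_
    by_cases ht : t = 0
    · exact Set.mem_iUnion.2 ⟨0, Or.inr (by simp [ht])⟩
    · have hpos : (0:ℝ) < ‖t‖ := norm_pos_iff.2 ht
      obtain ⟨n, hn⟩ := exists_nat_one_div_lt hpos
      exact Set.mem_iUnion.2 ⟨n, Or.inl (le_of_lt hn)⟩

include hρint hψ in
lemma psi_repr (x : EuclideanSpace ℝ (Fin d)) :
    ENNReal.ofReal (ψ x) =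
      ∫⁻ t, ENNReal.ofReal (1 - Real.cos (inner ℝ x t : ℝ))
        ∂(ρ.restrict ({(0 : EuclideanSpace ℝ (Fin d))}ᶜ)) := by
  have hint := K_integrable hρint x
  have hnn : ∀ t : EuclideanSpace ℝ (Fin d), 0 ≤ 1 - Real.cos (inner ℝ x t : ℝ) := fun t => by
    have := Real.cos_le_one (inner ℝ x t : ℝ); linarith
  have hsplit : ∫ t in ({(0 : EuclideanSpace ℝ (Fin d))} : Set _), (1 - Real.cos (inner ℝ x t : ℝ)) ∂ρ
      + ∫ t in ({(0 : EuclideanSpace ℝ (Fin d))}ᶜ), (1 - Real.cos (inner ℝ x t : ℝ)) ∂ρ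
      = ∫ t, (1 - Real.cos (inner ℝ x t : ℝ)) ∂ρ :=
    integral_add_compl (measurableSet_singleton 0) hint
  have hzero : ∫ t in ({(0 : EuclideanSpace ℝ (Fin d))} : Set _),
      (1 - Real.cos (inner ℝ x t : ℝ)) ∂ρ = 0 := by
    have h0 : Set.EqOn (fun t : EuclideanSpace ℝ (Fin d) => 1 - Real.cos (inner ℝ x t : ℝ))
        (fun _ => (0:ℝ)) {(0 : EuclideanSpace ℝ (Fin d))} := fun t ht => by
      rw [Set.mem_singleton_iff.1 ht]; simp
    rw [setIntegral_congr_fun (measurableSet_singleton 0) h0, integral_zero]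
  have heq : ψ x = ∫ t in ({(0 : EuclideanSpace ℝ (Fin d))}ᶜ),
      (1 - Real.cos (inner ℝ x t : ℝ)) ∂ρ := by
    rw [hψ, ← hsplit, hzero, zero_add]
  rw [heq]
  exact ofReal_integral_eq_lintegral_ofReal hint.restrict
    (Filter.Eventually.of_forall hnn)

lemma psi_meas' {ψ : EuclideanSpace ℝ (Fin d) → ℝ}
    {ρ' : Measure (EuclideanSpace ℝ (Fin d))} [SigmaFinite ρ']
    (hnn : ∀ x, 0 ≤ ψ x)
    (hrep : ∀ x, ENNReal.ofReal (ψ x) =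
      ∫⁻ t, ENNReal.ofReal (1 - Real.cos (inner ℝ x t : ℝ)) ∂ρ') :
    Measurable ψ := by
  have hm : Measurable fun x : EuclideanSpace ℝ (Fin d) =>
      ∫⁻ t, ENNReal.ofReal (1 - Real.cos (inner ℝ x t : ℝ)) ∂ρ' := by
    refine Measurable.lintegral_prod_right ?_
    exact ENNReal.measurable_ofReal.comp
      (continuous_const.sub (Real.continuous_cos.comp continuous_inner)).measurable
  have : ψ = fun x => (∫⁻ t, ENNReal.ofReal (1 - Real.cos (inner ℝ x t : ℝ)) ∂ρ').toReal := by
    funext x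
    rw [← hrep x, ENNReal.toReal_ofReal (hnn x)]
  rw [this]
  exact hm.ennreal_toReal

/-- Key averaging identity. -/
lemma psi_avg {Ω' : Type*} [MeasurableSpace Ω'] (ν : Measure Ω') [IsProbabilityMeasure ν]
    {ψ : EuclideanSpace ℝ (Fin d) → ℝ}
    {ρ' : Measure (EuclideanSpace ℝ (Fin d))} [SigmaFinite ρ']
    (hnn : ∀ x, 0 ≤ ψ x)
    (hrep : ∀ x, ENNReal.ofReal (ψ x) =
      ∫⁻ t, ENNReal.ofReal (1 - Real.cos (inner ℝ x t : ℝ)) ∂ρ')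
    (A : Ω' → EuclideanSpace ℝ (Fin d)) (hA : Measurable A)
    (hint : Integrable (fun ω => ψ (A ω)) ν) :
    ENNReal.ofReal (∫ ω, ψ (A ω) ∂ν) =
      ∫⁻ t, ENNReal.ofReal
        (1 - (∫ ω, Complex.exp (Complex.I * (inner ℝ t (A ω) : ℝ)) ∂ν).re) ∂ρ' := by
  have hmt : ∀ t : EuclideanSpace ℝ (Fin d),
      Measurable fun ω => (inner ℝ t (A ω) : ℝ) := fun t =>
    (Continuous.inner continuous_const continuous_id).measurable.comp hA
  have hexp_int : ∀ t : EuclideanSpace ℝ (Fin d),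
      Integrable (fun ω => Complex.exp (Complex.I * (inner ℝ t (A ω) : ℝ))) ν := by
    intro t
    refine (integrable_const (1:ℝ)).mono' ?_ ?_
    · exact (Complex.measurable_exp.comp
        ((measurable_const.mul (Complex.measurable_ofReal.comp (hmt t))))).aestronglyMeasurable
    · refine Filter.Eventually.of_forall fun ω => ?_
      rw [mul_comm, Complex.norm_exp_ofReal_mul_I]
  have hcos_int : ∀ t : EuclideanSpace ℝ (Fin d),
      Integrable (fun ω => 1 - Real.cos (inner ℝ (A ω) t : ℝ)) ν := by
    intro t
    have hmt' : Measurable fun ω => (inner ℝ (A ω) t : ℝ) :=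
      (Continuous.inner continuous_id continuous_const).measurable.comp hA
    refine (integrable_const (2:ℝ)).mono' ?_ ?_
    · exact (measurable_const.sub (Real.measurable_cos.comp hmt')).aestronglyMeasurable
    · refine Filter.Eventually.of_forall fun ω => ?_
      have h1 := Real.cos_le_one (inner ℝ (A ω) t : ℝ)
      have h2 := Real.neg_one_le_cos (inner ℝ (A ω) t : ℝ)
      rw [Real.norm_eq_abs, _root_.abs_of_nonneg (by linarith)]
      linarith
  calc ENNReal.ofReal (∫ ω, ψ (A ω) ∂ν)
      = ∫⁻ ω, ENNReal.ofReal (ψ (A ω)) ∂ν :=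
        ofReal_integral_eq_lintegral_ofReal hint
          (Filter.Eventually.of_forall fun ω => hnn _)
    _ = ∫⁻ ω, ∫⁻ t, ENNReal.ofReal (1 - Real.cos (inner ℝ (A ω) t : ℝ)) ∂ρ' ∂ν :=
        lintegral_congr fun ω => hrep (A ω)
    _ = ∫⁻ t, ∫⁻ ω, ENNReal.ofReal (1 - Real.cos (inner ℝ (A ω) t : ℝ)) ∂ν ∂ρ' := by
        have hconti : Continuous fun p : EuclideanSpace ℝ (Fin d) × EuclideanSpace ℝ (Fin d) =>
            (inner ℝ p.1 p.2 : ℝ) := continuous_inner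
        have hKm : Measurable (Function.uncurry fun (ω : Ω') (t : EuclideanSpace ℝ (Fin d)) =>
            ENNReal.ofReal (1 - Real.cos (inner ℝ (A ω) t : ℝ))) := by
          refine ENNReal.measurable_ofReal.comp ?_
          refine (measurable_const.sub (Real.measurable_cos.comp ?_))
          exact hconti.measurable.comp ((hA.comp measurable_fst).prodMk measurable_snd)
        exact lintegral_lintegral_swap
          (f := fun ω t => ENNReal.ofReal (1 - Real.cos (inner ℝ (A ω) t : ℝ))) hKm.aemeasurable
    _ = ∫⁻ t, ENNReal.ofReal
        (1 - (∫ ω, Complex.exp (Complex.I * (inner ℝ t (A ω) : ℝ)) ∂ν).re) ∂ρ' := by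
        refine lintegral_congr fun t => ?_
        rw [← ofReal_integral_eq_lintegral_ofReal (hcos_int t)
          (Filter.Eventually.of_forall fun ω => by
            have := Real.cos_le_one (inner ℝ (A ω) t : ℝ)
            simp only [Pi.zero_apply]; linarith)]
        congr 1
        have hre : (∫ ω, Complex.exp (Complex.I * (inner ℝ t (A ω) : ℝ)) ∂ν).re
            = ∫ ω, Real.cos (inner ℝ (A ω) t : ℝ) ∂ν := by
          rw [← RCLike.re_eq_complex_re, ← integral_re (hexp_int t)]
          refine integral_congr_ae (Filter.Eventually.of_forall fun ω => ?_)
          simp only [RCLike.re_eq_complex_re]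
          rw [mul_comm, Complex.exp_ofReal_mul_I_re, real_inner_comm]
        rw [integral_sub (integrable_const 1)
          (((integrable_const (1:ℝ)).sub (hcos_int t)).congr
            (Filter.Eventually.of_forall fun ω => by simp [Pi.sub_apply])), hre]
        simp

lemma complex_identity (u v : ℂ) (hu : ‖u‖ ≤ 1) (hv : ‖v‖ ≤ 1) :
    ENNReal.ofReal (1 - ((starRingEnd ℂ) u * v).re)
      + ENNReal.ofReal (1 - ((starRingEnd ℂ) v * u).re)
    = ENNReal.ofReal (1 - ((starRingEnd ℂ) u * u).re)
      + ENNReal.ofReal (1 - ((starRingEnd ℂ) v * v).re)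
      + ENNReal.ofReal (‖u - v‖ ^ 2) := by
  have key : ∀ w z : ℂ, ‖w‖ ≤ 1 → ‖z‖ ≤ 1 → 0 ≤ 1 - ((starRingEnd ℂ) w * z).re := by
    intro w z hw hz
    have h1 : ((starRingEnd ℂ) w * z).re ≤ ‖(starRingEnd ℂ) w * z‖ := Complex.re_le_norm _
    have h2 : ‖(starRingEnd ℂ) w * z‖ = ‖w‖ * ‖z‖ := by
      rw [norm_mul, RCLike.norm_conj]
    have h3 : ‖w‖ * ‖z‖ ≤ 1 :=
      mul_le_one₀ hw (norm_nonneg _) hz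
    linarith
  have h1 := key u v hu hv
  have h2 := key v u hv hu
  have h3 := key u u hu hu
  have h4 := key v v hv hv
  rw [← ENNReal.ofReal_add h1 h2, ← ENNReal.ofReal_add h3 h4,
    ← ENNReal.ofReal_add (by linarith) (sq_nonneg _)]
  congr 1
  have hn : ‖u - v‖ ^ 2 = (u.re - v.re) ^ 2 + (u.im - v.im) ^ 2 := by
    rw [Complex.sq_norm, Complex.normSq_apply, Complex.sub_re,
      Complex.sub_im]
    ring
  simp only [Complex.mul_re, Complex.conj_re, Complex.conj_im, hn]
  ring

end AuxLevy
/-- Characterization of the support of a Lévy measure: with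
`ψ(x) = ∫ (1 - cos⟪x,t⟫) dρ(t)` for a symmetric measure `ρ` integrating
`1 ∧ |t|²`, and random vectors `X, Y` with `E ψ(X) < ∞`, `E ψ(Y) < ∞`, the
characteristic functions of `X` and `Y` agree `ρ`-a.e. if and only if
`E ψ(X - z) = E ψ(Y - z)` for all `z`. -/
theorem charFun_eq_ae_iff_psi_moments_eq {d : ℕ} {Ω : Type*}
    [MeasurableSpace Ω] (μ : Measure Ω) [IsProbabilityMeasure μ]
    (ρ : Measure (EuclideanSpace ℝ (Fin d)))
    (hρsymm : ρ.map (fun t => -t) = ρ)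
    (hρint : Integrable (fun t => min 1 (‖t‖ ^ 2)) ρ)
    (ψ : EuclideanSpace ℝ (Fin d) → ℝ)
    (hψ : ∀ x, ψ x = ∫ t, (1 - Real.cos (inner ℝ x t : ℝ)) ∂ρ)
    (X Y : Ω → EuclideanSpace ℝ (Fin d)) (hX : Measurable X)
    (hY : Measurable Y)
    (hXmom : Integrable (fun ω => ψ (X ω)) μ)
    (hYmom : Integrable (fun ω => ψ (Y ω)) μ)
    (fX fY : EuclideanSpace ℝ (Fin d) → ℂ)
    (hfX : ∀ t, fX t = ∫ ω, Complex.exp (Complex.I * (inner ℝ t (X ω) : ℝ)) ∂μ)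
    (hfY : ∀ t, fY t = ∫ ω, Complex.exp (Complex.I * (inner ℝ t (Y ω) : ℝ)) ∂μ) :
    fX =ᵐ[ρ] fY ↔
      ∀ z, (∫ ω, ψ (X ω - z) ∂μ) = ∫ ω, ψ (Y ω - z) ∂μ := by
  haveI hSF : SigmaFinite (ρ.restrict ({(0 : EuclideanSpace ℝ (Fin d))}ᶜ)) :=
    rho_sigmaFinite hρint
  have hrep : ∀ x, ENNReal.ofReal (ψ x) =
      ∫⁻ t, ENNReal.ofReal (1 - Real.cos (inner ℝ x t : ℝ))
        ∂(ρ.restrict ({(0 : EuclideanSpace ℝ (Fin d))}ᶜ)) := psi_repr hρint hψ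
  have hnn : ∀ x, 0 ≤ ψ x := psi_nonneg hψ
  have hψm : Measurable ψ := psi_meas' hnn hrep
  -- integrability of shifted moments
  have hshift : ∀ (a : Ω → EuclideanSpace ℝ (Fin d)), Measurable a →
      Integrable (fun ω => ψ (a ω)) μ → ∀ z,
      Integrable (fun ω => ψ (a ω - z)) μ := by
    intro a ha hia z
    refine ((hia.const_mul 2).add (integrable_const (2 * ψ z))).mono' ?_ ?_
    · exact (hψm.comp (ha.sub measurable_const)).aestronglyMeasurable
    · refine Filter.Eventually.of_forall fun ω => ?_
      rw [Real.norm_eq_abs, _root_.abs_of_nonneg (hnn _)]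
      exact psi_sub_le hρint hψ (a ω) z
  -- exp-integral computation for shifts
  have hgz : ∀ (a : Ω → EuclideanSpace ℝ (Fin d)) (t z : EuclideanSpace ℝ (Fin d)),
      (∫ ω, Complex.exp (Complex.I * (inner ℝ t (a ω - z) : ℝ)) ∂μ)
        = (∫ ω, Complex.exp (Complex.I * (inner ℝ t (a ω) : ℝ)) ∂μ)
          * Complex.exp (-(Complex.I * ((inner ℝ t z : ℝ) : ℂ))) := by
    intro a t z
    rw [← integral_mul_const]
    refine integral_congr_ae (Filter.Eventually.of_forall fun ω => ?_)
    beta_reduce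
    rw [inner_sub_right, ← Complex.exp_add]
    congr 1
    push_cast
    ring
  constructor
  · -- forward direction
    intro hae z
    have hae' : fX =ᵐ[ρ.restrict ({(0 : EuclideanSpace ℝ (Fin d))}ᶜ)] fY :=
      hae.filter_mono (ae_mono Measure.restrict_le_self)
    have h1 := psi_avg μ hnn hrep (fun ω => X ω - z) (hX.sub measurable_const)
      (hshift X hX hXmom z)
    have h2 := psi_avg μ hnn hrep (fun ω => Y ω - z) (hY.sub measurable_const)
      (hshift Y hY hYmom z)
    have h1' : ENNReal.ofReal (∫ ω, ψ (X ω - z) ∂μ) =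
        ∫⁻ t, ENNReal.ofReal
          (1 - (fX t * Complex.exp (-(Complex.I * ((inner ℝ t z : ℝ) : ℂ)))).re)
          ∂(ρ.restrict ({(0 : EuclideanSpace ℝ (Fin d))}ᶜ)) := by
      beta_reduce at h1
      rw [h1]
      refine lintegral_congr fun t => ?_
      rw [hgz X t z, ← hfX t]
    have h2' : ENNReal.ofReal (∫ ω, ψ (Y ω - z) ∂μ) =
        ∫⁻ t, ENNReal.ofReal
          (1 - (fY t * Complex.exp (-(Complex.I * ((inner ℝ t z : ℝ) : ℂ)))).re)
          ∂(ρ.restrict ({(0 : EuclideanSpace ℝ (Fin d))}ᶜ)) := by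
      beta_reduce at h2
      rw [h2]
      refine lintegral_congr fun t => ?_
      rw [hgz Y t z, ← hfY t]
    have hcongr : (∫⁻ t, ENNReal.ofReal
          (1 - (fX t * Complex.exp (-(Complex.I * ((inner ℝ t z : ℝ) : ℂ)))).re)
          ∂(ρ.restrict ({(0 : EuclideanSpace ℝ (Fin d))}ᶜ))) =
        ∫⁻ t, ENNReal.ofReal
          (1 - (fY t * Complex.exp (-(Complex.I * ((inner ℝ t z : ℝ) : ℂ)))).re)
          ∂(ρ.restrict ({(0 : EuclideanSpace ℝ (Fin d))}ᶜ)) := by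
      refine lintegral_congr_ae (hae'.mono fun t ht => ?_)
      simp only [ht]
    have := h1'.trans (hcongr.trans h2'.symm)
    exact (ENNReal.ofReal_eq_ofReal_iff
      (integral_nonneg fun ω => hnn _) (integral_nonneg fun ω => hnn _)).1 this
  · -- reverse direction
    intro hz
    -- measurability of fX, fY
    have hfm : ∀ (a : Ω → EuclideanSpace ℝ (Fin d)), Measurable a →
        Measurable fun t => ∫ ω, Complex.exp (Complex.I * (inner ℝ t (a ω) : ℝ)) ∂μ := by
      intro a ha
      have hsm : StronglyMeasurable (Function.uncurry
          fun (t : EuclideanSpace ℝ (Fin d)) (ω : Ω) =>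
            Complex.exp (Complex.I * (inner ℝ t (a ω) : ℝ))) := by
        refine Measurable.stronglyMeasurable ?_
        refine Complex.measurable_exp.comp (measurable_const.mul
          (Complex.measurable_ofReal.comp ?_))
        exact (continuous_inner.measurable).comp
          (measurable_fst.prodMk (ha.comp measurable_snd))
      exact hsm.integral_prod_right.measurable
    have hfXm : Measurable fX := by
      have : fX = fun t => ∫ ω, Complex.exp (Complex.I * (inner ℝ t (X ω) : ℝ)) ∂μ := funext hfX
      rw [this]; exact hfm X hX
    have hfYm : Measurable fY := by
      have : fY = fun t => ∫ ω, Complex.exp (Complex.I * (inner ℝ t (Y ω) : ℝ)) ∂μ := funext hfY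
      rw [this]; exact hfm Y hY
    -- bounds
    have hb : ∀ (a : Ω → EuclideanSpace ℝ (Fin d)) (t : EuclideanSpace ℝ (Fin d)),
        ‖∫ ω, Complex.exp (Complex.I * (inner ℝ t (a ω) : ℝ)) ∂μ‖ ≤ 1 := by
      intro a t
      calc ‖∫ ω, Complex.exp (Complex.I * (inner ℝ t (a ω) : ℝ)) ∂μ‖
          ≤ 1 * (μ Set.univ).toReal := norm_integral_le_of_norm_le_const
            (Filter.Eventually.of_forall fun ω => by
              rw [mul_comm, Complex.norm_exp_ofReal_mul_I])
        _ = 1 := by simp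
    have hfX1 : ∀ t, ‖fX t‖ ≤ 1 := fun t => by rw [hfX]; exact hb X t
    have hfY1 : ∀ t, ‖fY t‖ ≤ 1 := fun t => by rw [hfY]; exact hb Y t
    -- product integrability
    have hfst : ∀ {f : Ω → ℝ}, Integrable f μ →
        Integrable (fun p : Ω × Ω => f p.1) (μ.prod μ) := by
      intro f hf
      have h1 : Integrable f (Measure.map Prod.fst (μ.prod μ)) := by
        rw [Measure.map_fst_prod]
        simpa [measure_univ] using hf
      exact (integrable_map_measure h1.aestronglyMeasurable
        measurable_fst.aemeasurable).1 h1
    have hsnd : ∀ {f : Ω → ℝ}, Integrable f μ →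
        Integrable (fun p : Ω × Ω => f p.2) (μ.prod μ) := by
      intro f hf
      have h1 : Integrable f (Measure.map Prod.snd (μ.prod μ)) := by
        rw [Measure.map_snd_prod]
        simpa [measure_univ] using hf
      exact (integrable_map_measure h1.aestronglyMeasurable
        measurable_snd.aemeasurable).1 h1
    have hprodint : ∀ (a b : Ω → EuclideanSpace ℝ (Fin d)), Measurable a → Measurable b →
        Integrable (fun ω => ψ (a ω)) μ → Integrable (fun ω => ψ (b ω)) μ →
        Integrable (fun p : Ω × Ω => ψ (a p.2 - b p.1)) (μ.prod μ) := by
      intro a b ha hb hia hib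
      refine (((hsnd hia).const_mul 2).add ((hfst hib).const_mul 2)).mono' ?_ ?_
      · exact (hψm.comp ((ha.comp measurable_snd).sub (hb.comp measurable_fst))).aestronglyMeasurable
      · refine Filter.Eventually.of_forall fun p => ?_
        rw [Real.norm_eq_abs, _root_.abs_of_nonneg (hnn _)]
        exact psi_sub_le hρint hψ (a p.2) (b p.1)
    -- exp integral over products
    have hgp : ∀ (a b : Ω → EuclideanSpace ℝ (Fin d)) (t : EuclideanSpace ℝ (Fin d)),
        (∫ p : Ω × Ω, Complex.exp (Complex.I * (inner ℝ t (a p.2 - b p.1) : ℝ)) ∂(μ.prod μ))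
          = (starRingEnd ℂ) (∫ ω, Complex.exp (Complex.I * (inner ℝ t (b ω) : ℝ)) ∂μ)
            * (∫ ω, Complex.exp (Complex.I * (inner ℝ t (a ω) : ℝ)) ∂μ) := by
      intro a b t
      have hpt : ∀ p : Ω × Ω, Complex.exp (Complex.I * (inner ℝ t (a p.2 - b p.1) : ℝ))
          = (fun ω => Complex.exp (-(Complex.I * ((inner ℝ t (b ω) : ℝ) : ℂ)))) p.1
            * (fun ω => Complex.exp (Complex.I * ((inner ℝ t (a ω) : ℝ) : ℂ))) p.2 := by
        intro p
        beta_reduce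
        rw [inner_sub_right, ← Complex.exp_add]
        congr 1
        push_cast
        ring
      calc ∫ p : Ω × Ω, Complex.exp (Complex.I * (inner ℝ t (a p.2 - b p.1) : ℝ)) ∂(μ.prod μ)
          = ∫ p : Ω × Ω, (fun ω => Complex.exp (-(Complex.I * ((inner ℝ t (b ω) : ℝ) : ℂ)))) p.1
              * (fun ω => Complex.exp (Complex.I * ((inner ℝ t (a ω) : ℝ) : ℂ))) p.2 ∂(μ.prod μ) :=
            integral_congr_ae (Filter.Eventually.of_forall hpt)
        _ = (∫ ω, Complex.exp (-(Complex.I * ((inner ℝ t (b ω) : ℝ) : ℂ))) ∂μ)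
              * ∫ ω, Complex.exp (Complex.I * ((inner ℝ t (a ω) : ℝ) : ℂ)) ∂μ :=
            integral_prod_mul (μ := μ) (ν := μ)
              (fun ω => Complex.exp (-(Complex.I * ((inner ℝ t (b ω) : ℝ) : ℂ))))
              (fun ω => Complex.exp (Complex.I * ((inner ℝ t (a ω) : ℝ) : ℂ)))
        _ = (starRingEnd ℂ) (∫ ω, Complex.exp (Complex.I * (inner ℝ t (b ω) : ℝ)) ∂μ)
              * ∫ ω, Complex.exp (Complex.I * (inner ℝ t (a ω) : ℝ)) ∂μ := by
            congr 1
            rw [← integral_conj]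
            refine integral_congr_ae (Filter.Eventually.of_forall fun ω => ?_)
            beta_reduce
            rw [← Complex.exp_conj]
            congr 1
            simp only [map_mul, Complex.conj_I, Complex.conj_ofReal]
            ring
    -- Fubini equalities from the hypothesis
    have hXX := hprodint X X hX hX hXmom hXmom
    have hYX := hprodint Y X hY hX hYmom hXmom
    have hXY := hprodint X Y hX hY hXmom hYmom
    have hYY := hprodint Y Y hY hY hYmom hYmom
    have E1 : (∫ p : Ω × Ω, ψ (X p.2 - X p.1) ∂(μ.prod μ))
        = ∫ p : Ω × Ω, ψ (Y p.2 - X p.1) ∂(μ.prod μ) := by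
      have hXXi := integral_integral (μ := μ) (ν := μ)
        (f := fun x y => ψ (X y - X x)) hXX
      have hYXi := integral_integral (μ := μ) (ν := μ)
        (f := fun x y => ψ (Y y - X x)) hYX
      rw [← hXXi, ← hYXi]
      exact integral_congr_ae (Filter.Eventually.of_forall fun x => hz (X x))
    have E2 : (∫ p : Ω × Ω, ψ (X p.2 - Y p.1) ∂(μ.prod μ))
        = ∫ p : Ω × Ω, ψ (Y p.2 - Y p.1) ∂(μ.prod μ) := by
      have hXYi := integral_integral (μ := μ) (ν := μ)
        (f := fun x y => ψ (X y - Y x)) hXY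
      have hYYi := integral_integral (μ := μ) (ν := μ)
        (f := fun x y => ψ (Y y - Y x)) hYY
      rw [← hXYi, ← hYYi]
      exact integral_congr_ae (Filter.Eventually.of_forall fun x => hz (Y x))
    -- lintegral representations
    have havg : ∀ (a b : Ω → EuclideanSpace ℝ (Fin d)) (ha : Measurable a) (hb : Measurable b)
        (fa fb : EuclideanSpace ℝ (Fin d) → ℂ)
        (hfa : ∀ t, fa t = ∫ ω, Complex.exp (Complex.I * (inner ℝ t (a ω) : ℝ)) ∂μ)
        (hfb : ∀ t, fb t = ∫ ω, Complex.exp (Complex.I * (inner ℝ t (b ω) : ℝ)) ∂μ)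
        (hint : Integrable (fun p : Ω × Ω => ψ (a p.2 - b p.1)) (μ.prod μ)),
        ENNReal.ofReal (∫ p : Ω × Ω, ψ (a p.2 - b p.1) ∂(μ.prod μ))
          = ∫⁻ t, ENNReal.ofReal (1 - ((starRingEnd ℂ) (fb t) * fa t).re)
              ∂(ρ.restrict ({(0 : EuclideanSpace ℝ (Fin d))}ᶜ)) := by
      intro a b ha hb fa fb hfa hfb hint
      have h := psi_avg (μ.prod μ) hnn hrep (fun p : Ω × Ω => a p.2 - b p.1)
        ((ha.comp measurable_snd).sub (hb.comp measurable_fst)) hint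
      beta_reduce at h
      rw [h]
      refine lintegral_congr fun t => ?_
      rw [hgp a b t, ← hfa t, ← hfb t]
    have HXX := havg X X hX hX fX fX hfX hfX hXX
    have HYX := havg Y X hY hX fY fX hfY hfX hYX
    have HXY := havg X Y hX hY fX fY hfX hfY hXY
    have HYY := havg Y Y hY hY fY fY hfY hfY hYY
    -- pointwise identity and lintegral splitting
    have hptid : ∀ t, ENNReal.ofReal (1 - ((starRingEnd ℂ) (fX t) * fY t).re)
        + ENNReal.ofReal (1 - ((starRingEnd ℂ) (fY t) * fX t).re)
        = ENNReal.ofReal (1 - ((starRingEnd ℂ) (fX t) * fX t).re)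
          + ENNReal.ofReal (1 - ((starRingEnd ℂ) (fY t) * fY t).re)
          + ENNReal.ofReal (‖fX t - fY t‖ ^ 2) := fun t =>
      complex_identity (fX t) (fY t) (hfX1 t) (hfY1 t)
    have hm1 : ∀ (f g : EuclideanSpace ℝ (Fin d) → ℂ), Measurable f → Measurable g →
        Measurable fun t => ENNReal.ofReal (1 - ((starRingEnd ℂ) (f t) * g t).re) := by
      intro f g hf hg
      refine ENNReal.measurable_ofReal.comp (measurable_const.sub
        (Complex.measurable_re.comp ?_))
      exact (Complex.continuous_conj.measurable.comp hf).mul hg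
    have hsum : (∫⁻ t, (ENNReal.ofReal (1 - ((starRingEnd ℂ) (fX t) * fY t).re)
          + ENNReal.ofReal (1 - ((starRingEnd ℂ) (fY t) * fX t).re))
          ∂(ρ.restrict ({(0 : EuclideanSpace ℝ (Fin d))}ᶜ)))
        = ∫⁻ t, (ENNReal.ofReal (1 - ((starRingEnd ℂ) (fX t) * fX t).re)
          + ENNReal.ofReal (1 - ((starRingEnd ℂ) (fY t) * fY t).re)
          + ENNReal.ofReal (‖fX t - fY t‖ ^ 2))
          ∂(ρ.restrict ({(0 : EuclideanSpace ℝ (Fin d))}ᶜ)) :=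
      lintegral_congr hptid
    rw [lintegral_add_left (hm1 fX fY hfXm hfYm),
      lintegral_add_left ((hm1 fX fX hfXm hfXm).add (hm1 fY fY hfYm hfYm) :
        Measurable fun t => _ + _),
      lintegral_add_left (hm1 fX fX hfXm hfXm)] at hsum
    rw [← HYX, ← HXY, ← HXX, ← HYY, ← E1, ← E2] at hsum
    have hfin : ENNReal.ofReal (∫ p : Ω × Ω, ψ (X p.2 - X p.1) ∂(μ.prod μ))
        + ENNReal.ofReal (∫ p : Ω × Ω, ψ (X p.2 - Y p.1) ∂(μ.prod μ)) ≠ ⊤ := by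
      exact ENNReal.add_ne_top.2 ⟨ENNReal.ofReal_ne_top, ENNReal.ofReal_ne_top⟩
    have hzero : (∫⁻ t, ENNReal.ofReal (‖fX t - fY t‖ ^ 2)
        ∂(ρ.restrict ({(0 : EuclideanSpace ℝ (Fin d))}ᶜ))) = 0 := by
      refine (ENNReal.add_right_inj hfin).1 ?_
      rw [add_zero]
      exact hsum.symm
    -- conclude a.e. equality on the restricted measure
    have hmn : Measurable fun t => ENNReal.ofReal (‖fX t - fY t‖ ^ 2) := by
      refine ENNReal.measurable_ofReal.comp ?_
      exact ((hfXm.sub hfYm).norm.pow measurable_const)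
    have hae' : ∀ᵐ t ∂(ρ.restrict ({(0 : EuclideanSpace ℝ (Fin d))}ᶜ)), fX t = fY t := by
      have h0 := (lintegral_eq_zero_iff hmn).1 hzero
      refine h0.mono fun t ht => ?_
      simp only [Pi.zero_apply, ENNReal.ofReal_eq_zero] at ht
      have : ‖fX t - fY t‖ ^ 2 = 0 := le_antisymm ht (sq_nonneg _)
      have h1 : ‖fX t - fY t‖ = 0 := by
        nlinarith [norm_nonneg (fX t - fY t)]
      exact sub_eq_zero.1 (norm_eq_zero.1 h1)
    -- extend to ρ
    have h0eq : fX 0 = fY 0 := by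
      rw [hfX, hfY]
      refine integral_congr_ae (Filter.Eventually.of_forall fun ω => ?_)
      simp [inner_zero_left]
    show ∀ᵐ t ∂ρ, fX t = fY t
    rw [ae_iff]
    have hs1 : ρ ({t | ¬ fX t = fY t} ∩ {(0 : EuclideanSpace ℝ (Fin d))}ᶜ) = 0 := by
      have := ae_iff.1 hae'
      rwa [Measure.restrict_apply' (measurableSet_singleton 0).compl] at this
    have hs2 : ρ ({t | ¬ fX t = fY t} \ {(0 : EuclideanSpace ℝ (Fin d))}ᶜ) = 0 := by
      refine measure_mono_null ?_ (measure_empty (μ := ρ))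
      intro t ht
      rcases ht with ⟨ht1, ht2⟩
      simp only [Set.mem_compl_iff, not_not] at ht2
      exact absurd (ht2 ▸ h0eq) ht1
    have := measure_le_inter_add_diff ρ {t | ¬ fX t = fY t}
      ({(0 : EuclideanSpace ℝ (Fin d))}ᶜ)
    rw [hs1, hs2, add_zero] at this
    exact le_antisymm this zero_le
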